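/- Let ρ₁, ρ₀ be probability measures on a measurable space Ω and let a, b > 0 be real numbers. Define the pointwise discriminator loss L(d, μ) := a·(KL(ρ₁‖μ) − log d) + b·(KL(ρ₀‖μ) − log(1−d)) ∈ (−∞,+∞] for d ∈ (0,1) and μ a probability measure on Ω, and set d* := a/(a+b) and ν := (a/(a+b))•ρ₁ + (b/(a+b))•ρ₀. Then L(d*, ν) is finite, L(d, μ) ≥ L(d*, ν) for all d ∈ (0,1) and all probability measures μ, and equality holds if and only if d = d* and μ = ν. -/

import Mathlib

open MeasureTheory ENNReal Classical

/-- The Kullback–Leibler divergence of `μ` with respect to `ν`, valued in `[0,+∞]`: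
`KL(μ‖ν) = ∫ log (dμ/dν) dμ` if `μ ≪ ν` and the log-likelihood ratio is integrable,
and `+∞` otherwise (Mathlib's `InformationTheory.klDiv`). -/
noncomputable def klDiv {Ω : Type*} [MeasurableSpace Ω] (μ ν : Measure Ω) : ℝ≥0∞ :=
  if μ ≪ ν ∧ Integrable (llr μ ν) μ then ENNReal.ofReal (∫ ω, llr μ ν ω ∂μ) else ⊤

/-- The pointwise discriminator loss
`L(d, μ) := a·(KL(ρ₁‖μ) − log d) + b·(KL(ρ₀‖μ) − log(1−d))`, valued in `(−∞,+∞]`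
(formalized in `EReal`), for a scalar realness score `d ∈ (0,1)` and an output
distribution `μ`. -/
noncomputable def discLoss {Ω : Type*} [MeasurableSpace Ω] (ρ₁ ρ₀ : Measure Ω)
    (a b : ℝ) (d : ℝ) (μ : Measure Ω) : EReal :=
  (a : EReal) * ((klDiv ρ₁ μ : ℝ≥0∞) - (Real.log d : ℝ)) +
    (b : EReal) * ((klDiv ρ₀ μ : ℝ≥0∞) - (Real.log (1 - d) : ℝ))

namespace DiscAux

variable {Ω : Type*} [MeasurableSpace Ω] {p q ν μ ρ₁ ρ₀ : Measure Ω}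

lemma lintegral_inv_rnDeriv_le [IsProbabilityMeasure p] [IsProbabilityMeasure q]
    (h : p ≪ q) : ∫⁻ x, (p.rnDeriv q x)⁻¹ ∂p ≤ 1 := by
  have heq : ∫⁻ x, (p.rnDeriv q x)⁻¹ ∂p
      = ∫⁻ x, (p.rnDeriv q x)⁻¹ ∂(q.withDensity (p.rnDeriv q)) := by
    rw [Measure.withDensity_rnDeriv_eq p q h]
  rw [heq, lintegral_withDensity_eq_lintegral_mul _ (Measure.measurable_rnDeriv p q) (g := fun x => (p.rnDeriv q x)⁻¹)
    (Measure.measurable_rnDeriv p q).inv]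
  calc ∫⁻ x, (p.rnDeriv q * fun x => (p.rnDeriv q x)⁻¹) x ∂q
      ≤ ∫⁻ _, 1 ∂q := lintegral_mono fun x => ENNReal.mul_inv_le_one _
    _ = 1 := by simp

lemma ofReal_inv_toReal_ae (h : p ≪ q) [SigmaFinite p] [SigmaFinite q] :
    (fun x => ENNReal.ofReal (((p.rnDeriv q x).toReal)⁻¹)) =ᵐ[p] fun x => (p.rnDeriv q x)⁻¹ := by
  filter_upwards [Measure.rnDeriv_pos h, h.ae_le (Measure.rnDeriv_lt_top p q)] with x hpos hlt
  rw [ENNReal.ofReal_inv_of_pos (ENNReal.toReal_pos hpos.ne' hlt.ne),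
    ENNReal.ofReal_toReal hlt.ne]

lemma integrable_inv_toReal_rnDeriv [IsProbabilityMeasure p] [IsProbabilityMeasure q]
    (h : p ≪ q) : Integrable (fun x => ((p.rnDeriv q x).toReal)⁻¹) p := by
  refine ⟨((Measure.measurable_rnDeriv p q).ennreal_toReal.inv).aestronglyMeasurable, ?_⟩
  rw [hasFiniteIntegral_iff_ofReal (ae_of_all _ fun x => by positivity)]
  rw [lintegral_congr_ae (ofReal_inv_toReal_ae h)]
  exact lt_of_le_of_lt (lintegral_inv_rnDeriv_le h) ENNReal.one_lt_top

lemma integral_inv_toReal_rnDeriv_le [IsProbabilityMeasure p] [IsProbabilityMeasure q]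
    (h : p ≪ q) : ∫ x, ((p.rnDeriv q x).toReal)⁻¹ ∂p ≤ 1 := by
  rw [integral_eq_lintegral_of_nonneg_ae (f := fun x => ((p.rnDeriv q x).toReal)⁻¹)
    (ae_of_all _ fun x => by positivity)
    ((Measure.measurable_rnDeriv p q).ennreal_toReal.inv).aestronglyMeasurable]
  refine ENNReal.toReal_le_of_le_ofReal zero_le_one ?_
  rw [ENNReal.ofReal_one, lintegral_congr_ae (ofReal_inv_toReal_ae h)]
  exact lintegral_inv_rnDeriv_le h

/-- Gibbs' inequality with the equality case. -/
lemma gibbs [IsProbabilityMeasure p] [IsProbabilityMeasure q] (h : p ≪ q)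
    (hint : Integrable (llr p q) p) :
    0 ≤ ∫ x, llr p q x ∂p ∧ (∫ x, llr p q x ∂p = 0 → p = q) := by
  set g : Ω → ℝ := fun x => ((p.rnDeriv q x).toReal)⁻¹ - 1 + llr p q x with hg_def
  have h1int : Integrable (fun x => ((p.rnDeriv q x).toReal)⁻¹ - 1) p :=
    (integrable_inv_toReal_rnDeriv h).sub (integrable_const 1)
  have hg_int : Integrable g p := h1int.add hint
  have hg_nonneg : 0 ≤ᵐ[p] g := by
    filter_upwards [Measure.rnDeriv_pos h, h.ae_le (Measure.rnDeriv_lt_top p q)] with x hpos hlt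
    have hr : 0 < (p.rnDeriv q x).toReal := ENNReal.toReal_pos hpos.ne' hlt.ne
    have := Real.log_le_sub_one_of_pos (inv_pos.mpr hr)
    rw [Real.log_inv] at this
    simp only [hg_def, llr, Pi.zero_apply]
    linarith
  have h2 : ∫ x, (((p.rnDeriv q x).toReal)⁻¹ - 1) ∂p
      = ∫ x, ((p.rnDeriv q x).toReal)⁻¹ ∂p - 1 := by
    rw [integral_sub (integrable_inv_toReal_rnDeriv h) (integrable_const 1)]
    simp
  have hg_eq : ∫ x, g x ∂p
      = (∫ x, ((p.rnDeriv q x).toReal)⁻¹ ∂p - 1) + ∫ x, llr p q x ∂p := by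
    rw [hg_def]
    exact (integral_add h1int hint).trans (by rw [h2])
  have hinv_le := integral_inv_toReal_rnDeriv_le h
  have hg0 : 0 ≤ ∫ x, g x ∂p := integral_nonneg_of_ae hg_nonneg
  constructor
  · linarith
  · intro hzero
    have hginteg0 : ∫ x, g x ∂p = 0 := by linarith
    have hinv1 : ∫ x, ((p.rnDeriv q x).toReal)⁻¹ ∂p = 1 := by
      rw [hg_eq, hzero] at hginteg0; linarith
    have hgae : g =ᵐ[p] 0 := (integral_eq_zero_iff_of_nonneg_ae hg_nonneg hg_int).mp
      (by linarith)
    have hD1 : p.rnDeriv q =ᵐ[p] fun _ => 1 := by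
      filter_upwards [hgae, Measure.rnDeriv_pos h, h.ae_le (Measure.rnDeriv_lt_top p q)]
        with x hx hpos hlt
      have hr : 0 < (p.rnDeriv q x).toReal := ENNReal.toReal_pos hpos.ne' hlt.ne
      have hr1 : (p.rnDeriv q x).toReal = 1 := by
        by_contra hne
        have hlog := Real.log_lt_sub_one_of_pos (inv_pos.mpr hr)
          (by simp only [ne_eq, inv_eq_one]; exact hne)
        rw [Real.log_inv] at hlog
        have hgx : g x = 0 := hx
        simp only [hg_def, llr] at hgx
        linarith
      have hne : (p.rnDeriv q x) ≠ ⊤ := hlt.ne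
      rw [← ENNReal.ofReal_toReal hne, hr1]; simp
    have hs0 : MeasurableSet {x | p.rnDeriv q x = 0} :=
      Measure.measurable_rnDeriv p q (measurableSet_singleton 0)
    have hlint1 : ∫⁻ x, (p.rnDeriv q x)⁻¹ ∂p = 1 := by
      have h1 : ∫ x, ((p.rnDeriv q x).toReal)⁻¹ ∂p
          = (∫⁻ x, ENNReal.ofReal (((p.rnDeriv q x).toReal)⁻¹) ∂p).toReal := by
        rw [integral_eq_lintegral_of_nonneg_ae (f := fun x => ((p.rnDeriv q x).toReal)⁻¹)
    (ae_of_all _ fun x => by positivity)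
          ((Measure.measurable_rnDeriv p q).ennreal_toReal.inv).aestronglyMeasurable]
      rw [h1, lintegral_congr_ae (ofReal_inv_toReal_ae h)] at hinv1
      have hle := lintegral_inv_rnDeriv_le h
      have hne : ∫⁻ x, (p.rnDeriv q x)⁻¹ ∂p ≠ ⊤ := (lt_of_le_of_lt hle ENNReal.one_lt_top).ne
      rw [← ENNReal.ofReal_toReal hne, hinv1]; simp
    have hq0 : q {x | p.rnDeriv q x = 0} = 0 := by
      have heq : ∫⁻ x, (p.rnDeriv q x)⁻¹ ∂p
          = ∫⁻ x, (p.rnDeriv q * fun x => (p.rnDeriv q x)⁻¹) x ∂q := by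
        have heq2 : ∫⁻ x, (p.rnDeriv q x)⁻¹ ∂p
            = ∫⁻ x, (p.rnDeriv q x)⁻¹ ∂(q.withDensity (p.rnDeriv q)) := by
          rw [Measure.withDensity_rnDeriv_eq p q h]
        rw [heq2, lintegral_withDensity_eq_lintegral_mul _ (Measure.measurable_rnDeriv p q) (g := fun x => (p.rnDeriv q x)⁻¹)
          (Measure.measurable_rnDeriv p q).inv]
      have hind : (p.rnDeriv q * fun x => (p.rnDeriv q x)⁻¹)
          =ᵐ[q] ({x | p.rnDeriv q x = 0}ᶜ).indicator (fun _ => 1) := by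
        filter_upwards [Measure.rnDeriv_lt_top p q] with x hlt
        by_cases hx0 : p.rnDeriv q x = 0
        · simp [Set.indicator_apply, hx0]
        · rw [Pi.mul_apply, ENNReal.mul_inv_cancel hx0 hlt.ne]
          simp [Set.indicator_apply, hx0]
      have hone : q ({x | p.rnDeriv q x = 0}ᶜ) = 1 := by
        have h3 : ∫⁻ x, ({x | p.rnDeriv q x = 0}ᶜ).indicator (fun _ => (1:ℝ≥0∞)) x ∂q
            = q ({x | p.rnDeriv q x = 0}ᶜ) := lintegral_indicator_one hs0.compl
        rw [← h3, ← lintegral_congr_ae hind, ← heq, hlint1]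
      have hcompl := measure_compl (μ := q) hs0.compl (measure_ne_top q _)
      rw [hone, measure_univ, compl_compl] at hcompl
      simpa using hcompl
    have hD1q : p.rnDeriv q =ᵐ[q] fun _ => 1 := by
      have hs : MeasurableSet {x | p.rnDeriv q x ≠ 1} :=
        (Measure.measurable_rnDeriv p q (measurableSet_singleton 1)).compl
      have hps : p {x | p.rnDeriv q x ≠ 1} = 0 := by
        have := ae_iff.mp hD1
        simpa [ne_eq] using this
      have hset : ∫⁻ x in {x | p.rnDeriv q x ≠ 1}, p.rnDeriv q x ∂q = 0 := by
        rw [Measure.setLIntegral_rnDeriv h]; exact hps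
      have h5 : ∀ᵐ x ∂q, x ∈ {x | p.rnDeriv q x ≠ 1} → p.rnDeriv q x = 0 :=
        (setLIntegral_eq_zero_iff hs (Measure.measurable_rnDeriv p q)).mp hset
      have hq0' : ∀ᵐ x ∂q, p.rnDeriv q x ≠ 0 := by
        rw [ae_iff]; simpa using hq0
      filter_upwards [h5, hq0'] with x hx hx0
      by_contra hne
      exact hx0 (hx hne)
    calc p = q.withDensity (p.rnDeriv q) := (Measure.withDensity_rnDeriv_eq p q h).symm
      _ = q.withDensity 1 := withDensity_congr_ae hD1q
      _ = q := withDensity_one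

lemma integral_llr_self (q : Measure Ω) [SigmaFinite q] :
    Integrable (llr q q) q ∧ ∫ x, llr q q x ∂q = 0 := by
  have h0 : llr q q =ᵐ[q] 0 := by
    filter_upwards [Measure.rnDeriv_self q] with x hx
    simp [llr, hx]
  refine ⟨(integrable_zero _ _ _).congr h0.symm, ?_⟩
  rw [integral_congr_ae h0]; simp

/-- The negative part of the log-likelihood ratio is integrable. -/
lemma integrable_neg_part_llr [IsProbabilityMeasure p] [IsProbabilityMeasure q]
    (h : p ≪ q) : Integrable (fun x => max (-llr p q x) 0) p := by
  refine ⟨((measurable_llr p q).neg.max measurable_const).aestronglyMeasurable, ?_⟩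
  rw [hasFiniteIntegral_iff_ofReal (f := fun x => max (-llr p q x) 0)
    (ae_of_all _ fun x => le_max_right _ _)]
  refine lt_of_le_of_lt (le_trans (lintegral_mono_ae ?_) (lintegral_inv_rnDeriv_le h))
    ENNReal.one_lt_top
  filter_upwards [Measure.rnDeriv_pos h, h.ae_le (Measure.rnDeriv_lt_top p q)] with x hpos hlt
  have hr : 0 < (p.rnDeriv q x).toReal := ENNReal.toReal_pos hpos.ne' hlt.ne
  have hb : max (-llr p q x) 0 ≤ ((p.rnDeriv q x).toReal)⁻¹ := by
    rw [llr]
    refine max_le ?_ (by positivity)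
    have hlog := Real.log_le_sub_one_of_pos (inv_pos.mpr hr)
    rw [Real.log_inv] at hlog
    have : (0:ℝ) < ((p.rnDeriv q x).toReal)⁻¹ := by positivity
    linarith
  calc ENNReal.ofReal (max (-llr p q x) 0) ≤ ENNReal.ofReal (((p.rnDeriv q x).toReal)⁻¹) :=
        ENNReal.ofReal_le_ofReal hb
    _ = (p.rnDeriv q x)⁻¹ := by
        rw [ENNReal.ofReal_inv_of_pos hr, ENNReal.ofReal_toReal hlt.ne]

/-- If `c • p ≤ q` with `c > 0`, then the llr is integrable. -/
lemma integrable_llr_of_smul_le {c : ℝ} (hc : 0 < c)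
    [IsProbabilityMeasure p] [IsProbabilityMeasure q]
    (h : p ≪ q) (hle : ENNReal.ofReal c • p ≤ q) : Integrable (llr p q) p := by
  have hub : ∀ᵐ x ∂q, ENNReal.ofReal c * p.rnDeriv q x ≤ 1 := by
    filter_upwards [Measure.rnDeriv_le_one_of_le hle,
      Measure.rnDeriv_smul_left_of_ne_top p q (ENNReal.ofReal_ne_top (r := c))] with x h1 h2
    rw [h2] at h1; simpa using h1
  have hM : ∀ᵐ x ∂p, max (llr p q x) 0 ≤ max (Real.log c⁻¹) 0 := by
    filter_upwards [h.ae_le hub, Measure.rnDeriv_pos h,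
      h.ae_le (Measure.rnDeriv_lt_top p q)] with x hx hpos hlt
    have hr : 0 < (p.rnDeriv q x).toReal := ENNReal.toReal_pos hpos.ne' hlt.ne
    have hcr : c * (p.rnDeriv q x).toReal ≤ 1 := by
      have h3 := ENNReal.toReal_mono ENNReal.one_ne_top hx
      rwa [ENNReal.toReal_mul, ENNReal.toReal_ofReal hc.le, ENNReal.toReal_one] at h3
    have hle' : (p.rnDeriv q x).toReal ≤ c⁻¹ :=
      (mul_le_mul_iff_right₀ hc).mp (by rw [mul_inv_cancel₀ hc.ne']; exact hcr)
    exact max_le_max (by rw [llr]; exact Real.log_le_log hr hle') le_rfl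
  have hpos_int : Integrable (fun x => max (llr p q x) 0) p := by
    refine Integrable.mono' (integrable_const (max (Real.log c⁻¹) 0))
      (((measurable_llr p q).max measurable_const).aestronglyMeasurable) ?_
    filter_upwards [hM] with x hx
    rw [Real.norm_eq_abs, abs_of_nonneg (le_max_right _ _)]
    exact hx
  have hdecomp : llr p q = fun x => max (llr p q x) 0 - max (-llr p q x) 0 := by
    funext x
    rcases le_total (llr p q x) 0 with h'|h'
    · rw [max_eq_right h', max_eq_left (by linarith)]; ring
    · rw [max_eq_left h', max_eq_right (by linarith)]; ring
  rw [hdecomp]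
  exact hpos_int.sub (integrable_neg_part_llr h)

/-- Chain rule for log-likelihood ratios. -/
lemma llr_chain [SigmaFinite p] [SigmaFinite ν] [SigmaFinite μ]
    (hpν : p ≪ ν) (hνμ : ν ≪ μ) :
    llr p μ =ᵐ[p] fun x => llr p ν x + llr ν μ x := by
  have h1 := Measure.rnDeriv_mul_rnDeriv (κ := μ) hpν
  filter_upwards [(hpν.trans hνμ).ae_le h1, Measure.rnDeriv_pos hpν,
    hpν.ae_le (Measure.rnDeriv_lt_top p ν), hpν.ae_le (Measure.rnDeriv_pos hνμ),
    (hpν.trans hνμ).ae_le (Measure.rnDeriv_lt_top ν μ)] with x hx h1p h1t h2p h2t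
  rw [llr, ← hx, Pi.mul_apply, ENNReal.toReal_mul, Real.log_mul, llr, llr]
  · exact (ENNReal.toReal_pos h1p.ne' h1t.ne).ne'
  · exact (ENNReal.toReal_pos h2p.ne' h2t.ne).ne'

lemma scalar_lt {a b : ℝ} (ha : 0 < a) (hb : 0 < b) :
    ∀ d : ℝ, 0 < d → d < 1 → d ≠ a / (a + b) →
    a * Real.log d + b * Real.log (1 - d)
      < a * Real.log (a / (a + b)) + b * Real.log (b / (a + b)) := by
  intro d h0 h1 hne
  have hs : 0 < a + b := by linarith
  have h1d : (0:ℝ) < 1 - d := by linarith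
  have e1 : Real.log (d * (a + b) / a) = Real.log d - Real.log (a / (a + b)) := by
    rw [Real.log_div (by positivity) ha.ne', Real.log_mul h0.ne' hs.ne',
      Real.log_div ha.ne' hs.ne']
    ring
  have e2 : Real.log ((1 - d) * (a + b) / b) = Real.log (1 - d) - Real.log (b / (a + b)) := by
    rw [Real.log_div (by positivity) hb.ne', Real.log_mul (by linarith) hs.ne',
      Real.log_div hb.ne' hs.ne']
    ring
  have hlt1 : Real.log (d * (a + b) / a) < d * (a + b) / a - 1 := by
    refine Real.log_lt_sub_one_of_pos (by positivity) ?_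
    intro hcon
    apply hne
    field_simp at hcon
    field_simp
    linarith
  have hle2 : Real.log ((1 - d) * (a + b) / b) ≤ (1 - d) * (a + b) / b - 1 :=
    Real.log_le_sub_one_of_pos (by positivity)
  rw [e1] at hlt1
  rw [e2] at hle2
  have m1 := mul_lt_mul_of_pos_left hlt1 ha
  have m2 := mul_le_mul_of_nonneg_left hle2 hb.le
  rw [mul_sub] at m1 m2
  have hzero : a * (d * (a + b) / a - 1) + b * ((1 - d) * (a + b) / b - 1) = 0 := by
    field_simp
    ring
  linarith

lemma klDiv_of_ne_top (h : klDiv p q ≠ ⊤) : p ≪ q ∧ Integrable (llr p q) p := by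
  rw [klDiv] at h
  by_cases hc : p ≪ q ∧ Integrable (llr p q) p
  · exact hc
  · rw [if_neg hc] at h; exact absurd rfl h

lemma klDiv_eq (h : p ≪ q) (hint : Integrable (llr p q) p) :
    klDiv p q = ENNReal.ofReal (∫ x, llr p q x ∂p) := if_pos ⟨h, hint⟩

lemma discLoss_eval {a b d J₁ J₀ : ℝ} (hJ₁ : 0 ≤ J₁) (hJ₀ : 0 ≤ J₀)
    (h1 : klDiv ρ₁ μ = ENNReal.ofReal J₁) (h0 : klDiv ρ₀ μ = ENNReal.ofReal J₀) :
    discLoss ρ₁ ρ₀ a b d μ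
      = ((a * (J₁ - Real.log d) + b * (J₀ - Real.log (1 - d)) : ℝ) : EReal) := by
  rw [discLoss, h1, h0, EReal.coe_ennreal_ofReal, EReal.coe_ennreal_ofReal,
    max_eq_left hJ₁, max_eq_left hJ₀]
  norm_cast

lemma term_ne_bot {c r : ℝ} (hc : 0 < c) (K : ℝ≥0∞) :
    (c : EReal) * ((K : EReal) - (r : ℝ)) ≠ ⊥ := by
  by_cases hK : K = ⊤
  · rw [hK, EReal.coe_ennreal_top, EReal.top_sub_coe, EReal.coe_mul_top_of_pos hc]
    simp
  · rw [← ENNReal.ofReal_toReal hK, EReal.coe_ennreal_ofReal, max_eq_left ENNReal.toReal_nonneg]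
    rw [← EReal.coe_sub, ← EReal.coe_mul]
    exact EReal.coe_ne_bot _

lemma term_top {c r : ℝ} (hc : 0 < c) :
    (c : EReal) * (((⊤ : ℝ≥0∞) : EReal) - (r : ℝ)) = ⊤ := by
  rw [EReal.coe_ennreal_top, EReal.top_sub_coe, EReal.coe_mul_top_of_pos hc]

lemma discLoss_top {a b d : ℝ} (ha : 0 < a) (hb : 0 < b)
    (h : klDiv ρ₁ μ = ⊤ ∨ klDiv ρ₀ μ = ⊤) : discLoss ρ₁ ρ₀ a b d μ = ⊤ := by
  rcases h with h | h
  · rw [discLoss, h, term_top ha, EReal.top_add_of_ne_bot (term_ne_bot hb _)]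
  · rw [discLoss, h, term_top hb, EReal.add_top_of_ne_bot (term_ne_bot ha _)]

end DiscAux

open DiscAux

/-- **Pointwise optimal discriminator (scalar and distributional parts).** For probability
measures `ρ₁, ρ₀` and weights `a, b > 0`, with `d* := a/(a+b)` and
`ν := (a/(a+b))•ρ₁ + (b/(a+b))•ρ₀`, the loss value `L(d*, ν)` is finite,
`L(d, μ) ≥ L(d*, ν)` for all `d ∈ (0,1)` and all probability measures `μ`, and equality
holds if and only if `d = d*` and `μ = ν`. -/
theorem discLoss_unique_minimizer {Ω : Type*} [MeasurableSpace Ω]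
    (ρ₁ ρ₀ : Measure Ω) [IsProbabilityMeasure ρ₁] [IsProbabilityMeasure ρ₀]
    (a b : ℝ) (ha : 0 < a) (hb : 0 < b)
    (dstar : ℝ) (hd : dstar = a / (a + b))
    (ν : Measure Ω)
    (hν : ν = ENNReal.ofReal (a / (a + b)) • ρ₁ + ENNReal.ofReal (b / (a + b)) • ρ₀) :
    (discLoss ρ₁ ρ₀ a b dstar ν ≠ ⊤ ∧ discLoss ρ₁ ρ₀ a b dstar ν ≠ ⊥) ∧
      ∀ d ∈ Set.Ioo (0 : ℝ) 1, ∀ (μ : Measure Ω), IsProbabilityMeasure μ →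
        discLoss ρ₁ ρ₀ a b d μ ≥ discLoss ρ₁ ρ₀ a b dstar ν ∧
          (discLoss ρ₁ ρ₀ a b d μ = discLoss ρ₁ ρ₀ a b dstar ν ↔ d = dstar ∧ μ = ν) := by
  have hs : (0:ℝ) < a + b := by linarith
  have hc₁ : (0:ℝ) < a / (a + b) := by positivity
  have hc₀ : (0:ℝ) < b / (a + b) := by positivity
  have hsum1 : a / (a + b) + b / (a + b) = 1 := by field_simp
  -- ν is a probability measure
  haveI hνprob : IsProbabilityMeasure ν := by
    constructor
    rw [hν]
    simp only [Measure.add_apply, Measure.smul_apply, smul_eq_mul, measure_univ, mul_one]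
    rw [← ENNReal.ofReal_add hc₁.le hc₀.le, hsum1, ENNReal.ofReal_one]
  have hle₁ : ENNReal.ofReal (a / (a + b)) • ρ₁ ≤ ν := hν ▸ Measure.le_add_right le_rfl
  have hle₀ : ENNReal.ofReal (b / (a + b)) • ρ₀ ≤ ν := hν ▸ Measure.le_add_left le_rfl
  have hac₁ : ρ₁ ≪ ν := by
    refine Measure.AbsolutelyContinuous.mk fun s hms h0 => ?_
    rw [hν] at h0
    simp only [Measure.add_apply, Measure.smul_apply, smul_eq_mul, add_eq_zero,
      mul_eq_zero, ENNReal.ofReal_eq_zero] at h0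
    rcases h0.1 with h' | h'
    · linarith
    · exact h'
  have hac₀ : ρ₀ ≪ ν := by
    refine Measure.AbsolutelyContinuous.mk fun s hms h0 => ?_
    rw [hν] at h0
    simp only [Measure.add_apply, Measure.smul_apply, smul_eq_mul, add_eq_zero,
      mul_eq_zero, ENNReal.ofReal_eq_zero] at h0
    rcases h0.2 with h' | h'
    · linarith
    · exact h'
  have hint₁ : Integrable (llr ρ₁ ν) ρ₁ := integrable_llr_of_smul_le hc₁ hac₁ hle₁
  have hint₀ : Integrable (llr ρ₀ ν) ρ₀ := integrable_llr_of_smul_le hc₀ hac₀ hle₀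
  set K₁ := ∫ x, llr ρ₁ ν x ∂ρ₁ with hK₁def
  set K₀ := ∫ x, llr ρ₀ ν x ∂ρ₀ with hK₀def
  have hK₁0 : 0 ≤ K₁ := (gibbs hac₁ hint₁).1
  have hK₀0 : 0 ≤ K₀ := (gibbs hac₀ hint₀).1
  have hkl₁ν : klDiv ρ₁ ν = ENNReal.ofReal K₁ := klDiv_eq hac₁ hint₁
  have hkl₀ν : klDiv ρ₀ ν = ENNReal.ofReal K₀ := klDiv_eq hac₀ hint₀
  have hLν : discLoss ρ₁ ρ₀ a b dstar ν
      = ((a * (K₁ - Real.log dstar) + b * (K₀ - Real.log (1 - dstar)) : ℝ) : EReal) :=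
    discLoss_eval hK₁0 hK₀0 hkl₁ν hkl₀ν
  have hdstar0 : 0 < dstar := hd ▸ hc₁
  have hdstar1 : dstar < 1 := by rw [hd, div_lt_one hs]; linarith
  have h1md : 1 - dstar = b / (a + b) := by rw [hd]; field_simp; ring
  refine ⟨⟨by rw [hLν]; exact EReal.coe_ne_top _, by rw [hLν]; exact EReal.coe_ne_bot _⟩, ?_⟩
  rintro d ⟨hd0, hd1⟩ μ hμprob
  haveI := hμprob
  by_cases htop : klDiv ρ₁ μ = ⊤ ∨ klDiv ρ₀ μ = ⊤
  · have hdl : discLoss ρ₁ ρ₀ a b d μ = ⊤ := discLoss_top ha hb htop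
    constructor
    · rw [hdl]; exact le_top
    · constructor
      · intro hcon
        rw [hdl, hLν] at hcon
        exact absurd hcon.symm (EReal.coe_ne_top _)
      · rintro ⟨-, rfl⟩
        rcases htop with h' | h'
        · rw [hkl₁ν] at h'; exact absurd h' (ENNReal.ofReal_ne_top)
        · rw [hkl₀ν] at h'; exact absurd h' (ENNReal.ofReal_ne_top)
  · push_neg at htop
    obtain ⟨hac₁μ, hint₁μ⟩ := klDiv_of_ne_top htop.1
    obtain ⟨hac₀μ, hint₀μ⟩ := klDiv_of_ne_top htop.2
    set J₁ := ∫ x, llr ρ₁ μ x ∂ρ₁ with hJ₁def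
    set J₀ := ∫ x, llr ρ₀ μ x ∂ρ₀ with hJ₀def
    have hJ₁0 : 0 ≤ J₁ := (gibbs hac₁μ hint₁μ).1
    have hJ₀0 : 0 ≤ J₀ := (gibbs hac₀μ hint₀μ).1
    have hkl₁μ : klDiv ρ₁ μ = ENNReal.ofReal J₁ := klDiv_eq hac₁μ hint₁μ
    have hkl₀μ : klDiv ρ₀ μ = ENNReal.ofReal J₀ := klDiv_eq hac₀μ hint₀μ
    have hLμ : discLoss ρ₁ ρ₀ a b d μ
        = ((a * (J₁ - Real.log d) + b * (J₀ - Real.log (1 - d)) : ℝ) : EReal) :=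
      discLoss_eval hJ₁0 hJ₀0 hkl₁μ hkl₀μ
    have hacνμ : ν ≪ μ := by
      refine Measure.AbsolutelyContinuous.mk fun s hms h0 => ?_
      rw [hν]
      simp [Measure.add_apply, Measure.smul_apply, smul_eq_mul, hac₁μ h0, hac₀μ h0]
    have chain₁ : llr ρ₁ μ =ᵐ[ρ₁] fun x => llr ρ₁ ν x + llr ν μ x := llr_chain hac₁ hacνμ
    have chain₀ : llr ρ₀ μ =ᵐ[ρ₀] fun x => llr ρ₀ ν x + llr ν μ x := llr_chain hac₀ hacνμ
    have hintνμ₁ : Integrable (llr ν μ) ρ₁ := by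
      refine (hint₁μ.sub hint₁).congr ?_
      filter_upwards [chain₁] with x hx
      simp only [Pi.sub_apply]
      rw [hx]; ring
    have hintνμ₀ : Integrable (llr ν μ) ρ₀ := by
      refine (hint₀μ.sub hint₀).congr ?_
      filter_upwards [chain₀] with x hx
      simp only [Pi.sub_apply]
      rw [hx]; ring
    have hI₁ : ∫ x, llr ν μ x ∂ρ₁ = J₁ - K₁ := by
      have h' := integral_congr_ae chain₁
      rw [integral_add hint₁ hintνμ₁] at h'
      rw [hJ₁def, hK₁def]
      linarith [h']
    have hI₀ : ∫ x, llr ν μ x ∂ρ₀ = J₀ - K₀ := by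
      have h' := integral_congr_ae chain₀
      rw [integral_add hint₀ hintνμ₀] at h'
      rw [hJ₀def, hK₀def]
      linarith [h']
    set f := llr ν μ with hfdef
    have hintνμ : Integrable f ν := by
      rw [hν]
      exact (hintνμ₁.smul_measure ENNReal.ofReal_ne_top).add_measure
        (hintνμ₀.smul_measure ENNReal.ofReal_ne_top)
    set T := ∫ x, f x ∂ν with hTdef
    have hT : T = (a / (a + b)) * (J₁ - K₁) + (b / (a + b)) * (J₀ - K₀) := by
      rw [hTdef, hν, integral_add_measure
        (hintνμ₁.smul_measure (ENNReal.ofReal_ne_top (r := a / (a + b))))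
        (hintνμ₀.smul_measure (ENNReal.ofReal_ne_top (r := b / (a + b)))), integral_smul_measure,
        integral_smul_measure, ENNReal.toReal_ofReal hc₁.le, ENNReal.toReal_ofReal hc₀.le,
        hI₁, hI₀]
      simp [smul_eq_mul]
    have hT0 : 0 ≤ T := (gibbs hacνμ hintνμ).1
    have hTeq : T = 0 → ν = μ := (gibbs hacνμ hintνμ).2
    have hsumT : a * (J₁ - K₁) + b * (J₀ - K₀) = (a + b) * T := by
      rw [hT]; field_simp
    have hsT0 : 0 ≤ (a + b) * T := mul_nonneg hs.le hT0
    -- scalar part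
    have hSle : a * Real.log d + b * Real.log (1 - d)
        ≤ a * Real.log dstar + b * Real.log (1 - dstar) := by
      rcases eq_or_ne d dstar with rfl | hne
      · exact le_rfl
      · have := scalar_lt ha hb d hd0 hd1 (by rw [← hd]; exact hne)
        rw [← hd, ← h1md] at this
        linarith
    have key : a * (J₁ - Real.log d) + b * (J₀ - Real.log (1 - d))
        - (a * (K₁ - Real.log dstar) + b * (K₀ - Real.log (1 - dstar)))
        = (a * (J₁ - K₁) + b * (J₀ - K₀))
          + ((a * Real.log dstar + b * Real.log (1 - dstar))
            - (a * Real.log d + b * Real.log (1 - d))) := by ring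
    constructor
    · rw [hLμ, hLν, ge_iff_le, EReal.coe_le_coe_iff]
      linarith [key, hsumT, hsT0, hSle]
    · constructor
      · intro heq
        rw [hLμ, hLν] at heq
        have heqr := EReal.coe_eq_coe_iff.mp heq
        have hgap0 : (a * Real.log dstar + b * Real.log (1 - dstar))
            - (a * Real.log d + b * Real.log (1 - d)) = 0 := by
          linarith [key, hsumT, hsT0, hSle]
        have hTzero : T = 0 := by
          have h7 : (a + b) * T = 0 := by linarith [key, hsumT]
          exact (mul_eq_zero.mp h7).resolve_left hs.ne'
        have hdeq : d = dstar := by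
          by_contra hne
          have := scalar_lt ha hb d hd0 hd1 (by rw [← hd]; exact hne)
          rw [← hd, ← h1md] at this
          linarith
        exact ⟨hdeq, (hTeq hTzero).symm⟩
      · rintro ⟨rfl, rfl⟩
        rfl
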